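/- arXiv:1606.04498 — 2 statements merged into one kernel-verified Lean document; each statement's English description precedes it below -/
import Mathlib

section
/- Lagrange inversion for the topological recursion kernel: let y_1,…,y_r be distinct elements of a field, P(Y)=∏_{j=1}^r(Y-y_j), and let Q_1,…,Q_r be given elements. Define Q(i) = ∑_{k=1}^{r} (-1)^k y_i^{r-k} Q_k for each i. Then for each m with 1 ≤ m ≤ r, Q_m = -∑_{i=1}^{r} (Q(i)/P'(y_i)) · e_{m-1}(y_1,…,ŷ_i,…,y_r), where e_{m-1} is the elementary symmetric polynomial of degree m-1 in the roots with y_i omitted. -/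
/-!
`Q(i)` is the value at `y_i` of `f = ∑_k (-1)^k Q_k X^{r-k}`. Since `deg f < r`, `f` equals its
Lagrange interpolant on the nodes `y_i`, so its coefficient `(-1)^m Q_m` of `X^{r-m}` is read off
the basis polynomials `∏_{j≠i} (X - y_j) / P'(y_i)`, whose coefficients are signed elementary
symmetric functions of the `y_j`, `j ≠ i`, by Vieta.
-/

open Finset Polynomial

namespace Lagrange

variable {F ι : Type*} [Field F] {s : Finset ι} {v : ι → F}

theorem coeff_nodal {k : ℕ} (hk : k ≤ #s) :
    (nodal s v).coeff (#s - k) = (-1) ^ k * ∑ S ∈ s.powersetCard k, ∏ j ∈ S, v j := by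
  have hcard : Multiset.card (s.val.map v) = #s := Multiset.card_map _ _
  have hmap : s.val.map (fun j => X - C (v j)) = (s.val.map v).map (fun t => X - C t) :=
    (Multiset.map_map (fun t => X - C t) v s.val).symm
  rw [nodal_eq, ← Finset.prod_map_val, hmap, Multiset.prod_X_sub_C_coeff _ (by omega), hcard,
    Nat.sub_sub_self hk, Finset.esymm_map_val]

variable [DecidableEq ι]

theorem basis_eq_C_nodalWeight_mul_nodal_erase {i : ι} (hi : i ∈ s) :
    Lagrange.basis s v i = C (nodalWeight s v i) * nodal (s.erase i) v := by
  rw [basis_eq_prod_sub_inv_mul_nodal_div hi, nodal_erase_eq_nodal_div hi, nodalWeight]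

theorem coeff_eq_sum_eval_mul_coeff_basis {f : F[X]} (hvs : Set.InjOn v s) (hf : f.degree < #s)
    (n : ℕ) : f.coeff n = ∑ i ∈ s, f.eval (v i) * (Lagrange.basis s v i).coeff n := by
  conv_lhs => rw [eq_interpolate hvs hf, interpolate_apply, finsetSum_coeff]
  simp only [coeff_mul_C, mul_comm]

theorem coeff_eq_sum_eval_mul_nodalWeight_mul_esymm {f : F[X]} (hvs : Set.InjOn v s)
    (hf : f.degree < #s) {k : ℕ} (hk : k < #s) :
    f.coeff (#s - 1 - k) = (-1) ^ k * ∑ i ∈ s,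
      f.eval (v i) * nodalWeight s v i * ∑ S ∈ (s.erase i).powersetCard k, ∏ j ∈ S, v j := by
  rw [coeff_eq_sum_eval_mul_coeff_basis hvs hf, mul_sum]
  refine sum_congr rfl fun i hi => ?_
  have hcard : #(s.erase i) = #s - 1 := card_erase_of_mem hi
  rw [basis_eq_C_nodalWeight_mul_nodal_erase hi, coeff_C_mul, ← hcard, coeff_nodal (by omega)]
  ring

end Lagrange

section SignedReversePoly

variable {F : Type*} [Field F]

noncomputable def signedReversePoly (r : ℕ) (Q : ℕ → F) : F[X] :=
  ∑ k ∈ Icc 1 r, C ((-1) ^ k * Q k) * X ^ (r - k)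

theorem degree_signedReversePoly_lt (r : ℕ) (Q : ℕ → F) :
    (signedReversePoly r Q).degree < r := by
  refine (degree_sum_le _ _).trans_lt
    ((Finset.sup_lt_iff (WithBot.bot_lt_coe r)).2 fun k hk => ?_)
  refine (degree_C_mul_X_pow_le _ _).trans_lt (Nat.cast_lt.2 ?_)
  have := mem_Icc.1 hk
  omega

theorem coeff_signedReversePoly {r m : ℕ} (Q : ℕ → F) (hm1 : 1 ≤ m) (hmr : m ≤ r) :
    (signedReversePoly r Q).coeff (r - m) = (-1) ^ m * Q m := by
  rw [signedReversePoly, finsetSum_coeff, sum_eq_single_of_mem m (mem_Icc.2 ⟨hm1, hmr⟩)]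
  · rw [coeff_C_mul_X_pow, if_pos rfl]
  · intro k hk hkm
    have := mem_Icc.1 hk
    rw [coeff_C_mul_X_pow, if_neg (by omega)]

theorem eval_signedReversePoly (r : ℕ) (Q : ℕ → F) (x : F) :
    (signedReversePoly r Q).eval x = ∑ k ∈ Icc 1 r, (-1) ^ k * x ^ (r - k) * Q k := by
  simp only [signedReversePoly, eval_finsetSum, eval_mul, eval_C, eval_pow, eval_X]
  exact sum_congr rfl fun k _ => by ring

end SignedReversePoly

theorem stmt3_general {F : Type*} [Field F] (r : ℕ)
    (y : Fin r → F) (hy : Function.Injective y) (Q : ℕ → F) :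
    ∀ m, 1 ≤ m → m ≤ r →
      Q m = -∑ i : Fin r,
        ((∑ k ∈ Finset.Icc 1 r, (-1 : F) ^ k * (y i) ^ (r - k) * Q k) /
            ∏ l ∈ Finset.univ.erase i, (y i - y l)) *
          ∑ S ∈ (Finset.univ.erase i).powersetCard (m - 1), ∏ l ∈ S, y l := by
  rintro m hm1 hmr
  have key := Lagrange.coeff_eq_sum_eval_mul_nodalWeight_mul_esymm (s := univ) hy.injOn
    (by simpa using degree_signedReversePoly_lt r Q) (k := m - 1)
    (by simp only [card_univ, Fintype.card_fin]; omega)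
  rw [card_univ, Fintype.card_fin, show r - 1 - (m - 1) = r - m by omega,
    coeff_signedReversePoly Q hm1 hmr] at key
  simp only [eval_signedReversePoly, Lagrange.nodalWeight, prod_inv_distrib,
    ← div_eq_mul_inv] at key
  obtain ⟨n, rfl⟩ : ∃ n, m = n + 1 := ⟨m - 1, by omega⟩
  rw [pow_succ, mul_assoc, Nat.add_sub_cancel] at key
  rw [Nat.add_sub_cancel]
  linear_combination -mul_left_cancel₀ (pow_ne_zero n (neg_ne_zero.2 one_ne_zero)) key

/-- Lagrange inversion, Lemma 4.7 of Bouchard–Eynard with `p₀ = 1`: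
with `Q(i) = ∑_{k=1}^r (-1)^k y_i^{r-k} Q_k`, for each `1 ≤ m ≤ r`,
`Q_m = -∑_i (Q(i)/P'(y_i)) · e_{m-1}(y₁,…,ŷ_i,…,y_r)`. -/
theorem stmt3 {F : Type*} [Field F] [CharZero F] (r : ℕ) (hr : 1 ≤ r)
    (y : Fin r → F) (hy : Function.Injective y) (Q : ℕ → F) :
    ∀ m, 1 ≤ m → m ≤ r →
      Q m = -∑ i : Fin r,
        ((∑ k ∈ Finset.Icc 1 r, (-1 : F) ^ k * (y i) ^ (r - k) * Q k) /
            ∏ l ∈ Finset.univ.erase i, (y i - y l)) *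
          ∑ S ∈ (Finset.univ.erase i).powersetCard (m - 1), ∏ l ∈ S, y l :=
  stmt3_general r y hy Q
end

section
/- Relation between R and E: for all g, n, k ≥ 0, E^{(k)}W_{g,n+1}(t; z) = ∑_{i=0}^{k} ∑_{β ⊆ t, |β|=i} (∏_{s ∈ β} W_{0,1}(s)) · R^{(k−i)}W_{g,n+1}(t∖β; z), where R^{(j)}W is defined like E^{(j)}W but with all set-partition terms containing a factor W_{0,1} excluded (i.e. excluding blocks with (g_i, |μ_i|+|J_i|) = (0,1)), and R^{(0)}W_{g,n+1}(z) = E^{(0)}W_{g,n+1}(z) = δ_{g,0}δ_{n,0}. -/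
open Finset
open scoped Classical

/-- Set partitions of a finite set `t`: finsets of nonempty pairwise disjoint blocks
whose union is `t`. -/
noncomputable def setPartitions {σ : Type*} [DecidableEq σ] (t : Finset σ) :
    Finset (Finset (Finset σ)) :=
  (t.powerset.powerset).filter
    (fun parts => parts.sup id = t ∧ ∅ ∉ parts ∧
      ∀ p ∈ parts, ∀ q ∈ parts, p ≠ q → Disjoint p q)

/-- `E^{(k)}W_{g,n+1}(t; z)`: sum over set partitions `μ` of `t`, decompositions of `z`
indexed by the blocks of `μ`, and genus assignments summing to `g + ℓ(μ) - k`, of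
`∏_i W_{g_i,|μ_i|+|J_i|}(μ_i, J_i)`. -/
noncomputable def Esum {σ R : Type*} [DecidableEq σ] [CommRing R]
    (W : ℕ → Multiset σ → R) (k g : ℕ) (t zs : Finset σ) : R :=
  ∑ parts ∈ setPartitions t,
    ∑ f : { a // a ∈ zs } → { P // P ∈ parts },
      ∑ gs : { P // P ∈ parts } → Fin (g + parts.card + 1),
        if (∑ P : { P // P ∈ parts }, ((gs P : ℕ) : ℤ)) = (g : ℤ) + parts.card - k then
          ∏ P : { P // P ∈ parts },
            W (gs P)
              (P.1.val + (zs.attach.filter (fun a => f a = P)).val.map Subtype.val)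
        else 0

/-- `R^{(k)}W_{g,n+1}(t; z)`: as `E^{(k)}`, but excluding every term containing a factor
`W_{0,1}`, i.e. a block with `(g_i, |μ_i| + |J_i|) = (0,1)`. -/
noncomputable def Rsum {σ R : Type*} [DecidableEq σ] [CommRing R]
    (W : ℕ → Multiset σ → R) (k g : ℕ) (t zs : Finset σ) : R :=
  ∑ parts ∈ setPartitions t,
    ∑ f : { a // a ∈ zs } → { P // P ∈ parts },
      ∑ gs : { P // P ∈ parts } → Fin (g + parts.card + 1),
        if (∑ P : { P // P ∈ parts }, ((gs P : ℕ) : ℤ)) = (g : ℤ) + parts.card - k ∧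
            ∀ P : { P // P ∈ parts },
              ¬((gs P : ℕ) = 0 ∧
                P.1.card + (zs.attach.filter (fun a => f a = P)).card = 1) then
          ∏ P : { P // P ∈ parts },
            W (gs P)
              (P.1.val + (zs.attach.filter (fun a => f a = P)).val.map Subtype.val)
        else 0

/-!
The terms of `E^{(k)}W_{g,n+1}(t; z)` containing factors `W_{0,1}` are those with disk blocks:
singletons `{s}`, `s ∈ t`, of genus `0` receiving no `z`. Removing the set `β` of these blocks
lowers both the number of blocks and `k` by `|β|`, so it leaves the genus constraint
`∑ g_i = g + ℓ(μ) - k` intact and turns the term into `∏_{s ∈ β} W_{0,1}(s)` times a term of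
`R^{(k-|β|)}W_{g,n+1}(t ∖ β; z)`; adding back `|β|` singletons of genus `0` is the inverse. Grouping
the terms of `E^{(k)}` by `β` gives the formula.
-/

section SetPartitions

variable {σ : Type*} [DecidableEq σ] {t a b : Finset σ} {parts p₁ p₂ Q : Finset (Finset σ)}

theorem mem_setPartitions :
    parts ∈ setPartitions t ↔
      parts.sup id = t ∧ ∅ ∉ parts ∧ ∀ p ∈ parts, ∀ q ∈ parts, p ≠ q → Disjoint p q := by
  refine mem_filter.trans (and_iff_right_of_imp ?_)
  rintro ⟨rfl, -⟩
  exact mem_powerset.2 fun P hP => mem_powerset.2 (le_sup (f := id) hP)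

theorem subset_of_mem_setPartitions (h : parts ∈ setPartitions t) {P : Finset σ}
    (hP : P ∈ parts) : P ⊆ t :=
  (mem_setPartitions.1 h).1 ▸ le_sup (f := id) hP

theorem image_singleton_mem_setPartitions (β : Finset σ) :
    β.image singleton ∈ setPartitions β := by
  refine mem_setPartitions.2 ⟨?_, by simp, ?_⟩
  · rw [sup_image, Function.id_comp, sup_singleton_eq_self]
  · simp only [mem_image]
    rintro _ ⟨s, -, rfl⟩ _ ⟨s', -, rfl⟩ hss'
    exact disjoint_singleton.2 fun h => hss' (h ▸ rfl)

theorem union_mem_setPartitions (h₁ : p₁ ∈ setPartitions a) (h₂ : p₂ ∈ setPartitions b)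
    (hab : Disjoint a b) : p₁ ∪ p₂ ∈ setPartitions (a ∪ b) := by
  obtain ⟨hsup₁, hne₁, hdisj₁⟩ := mem_setPartitions.1 h₁
  obtain ⟨hsup₂, hne₂, hdisj₂⟩ := mem_setPartitions.1 h₂
  refine mem_setPartitions.2 ⟨by rw [sup_union, hsup₁, hsup₂]; rfl, by simp [hne₁, hne₂], ?_⟩
  have cross : ∀ p ∈ p₁, ∀ q ∈ p₂, Disjoint p q := fun p hp q hq =>
    hab.mono (subset_of_mem_setPartitions h₁ hp) (subset_of_mem_setPartitions h₂ hq)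
  simp only [mem_union]
  rintro p (hp | hp) q (hq | hq) hpq
  exacts [hdisj₁ p hp q hq hpq, cross p hp q hq, (cross q hq p hp).symm, hdisj₂ p hp q hq hpq]

theorem sdiff_mem_setPartitions (h : parts ∈ setPartitions t) (hQ : Q ⊆ parts)
    (hQb : Q ∈ setPartitions b) : parts \ Q ∈ setPartitions (t \ b) := by
  obtain ⟨rfl, hne, hdisj⟩ := mem_setPartitions.1 h
  obtain ⟨rfl, -, -⟩ := mem_setPartitions.1 hQb
  refine mem_setPartitions.2 ⟨?_, fun h' => hne (mem_sdiff.1 h').1,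
    fun p hp q hq => hdisj p (mem_sdiff.1 hp).1 q (mem_sdiff.1 hq).1⟩
  ext s
  simp only [mem_sup, id, mem_sdiff]
  constructor
  · rintro ⟨p, ⟨hp, hpQ⟩, hs⟩
    refine ⟨⟨p, hp, hs⟩, fun ⟨q, hq, hsq⟩ => hpQ ?_⟩
    by_contra hpq
    exact disjoint_left.1 (hdisj p hp q (hQ hq) (ne_of_mem_of_not_mem hq hpq).symm) hs hsq
  · rintro ⟨⟨p, hp, hs⟩, hsQ⟩
    exact ⟨p, ⟨hp, fun hpQ => hsQ ⟨p, hpQ, hs⟩⟩, hs⟩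

theorem disjoint_of_mem_setPartitions (h₁ : p₁ ∈ setPartitions a) (h₂ : p₂ ∈ setPartitions b)
    (hab : Disjoint a b) : Disjoint p₁ p₂ :=
  disjoint_left.2 fun P hP₁ hP₂ => (mem_setPartitions.1 h₁).2.1 <|
    (disjoint_self_iff_empty P).1
      (hab.mono (subset_of_mem_setPartitions h₁ hP₁) (subset_of_mem_setPartitions h₂ hP₂)) ▸ hP₁

theorem disjoint_image_singleton_of_mem_setPartitions_sdiff {β : Finset σ}
    (h : parts ∈ setPartitions (t \ β)) : Disjoint parts (β.image singleton) :=
  disjoint_of_mem_setPartitions h (image_singleton_mem_setPartitions β) sdiff_disjoint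

end SetPartitions

namespace BouchardEynard

/-- A summation index of `E^{(k)}` and `R^{(k)}`: a set partition `x.1`, the block `x.2.1 a`
receiving each `z_a`, and the genus `x.2.2 P` of each block `P`. -/
abbrev Config (σ : Type*) (zs : Finset σ) : Type _ :=
  Σ parts : Finset (Finset σ), ({ a // a ∈ zs } → { P // P ∈ parts }) × ({ P // P ∈ parts } → ℕ)

namespace Config

variable {σ : Type*} {zs : Finset σ} {x y : Config σ zs} {Q : Finset σ} {s : σ}

def blockOf (x : Config σ zs) (a : { a // a ∈ zs }) : Finset σ := (x.2.1 a).1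

theorem blockOf_mem (x : Config σ zs) (a : { a // a ∈ zs }) : x.blockOf a ∈ x.1 := (x.2.1 a).2

variable [DecidableEq σ]

-- Genus and attached `z`'s as functions of an arbitrary `Q : Finset σ`; unlike `x.2`, these are
-- unchanged when disk blocks are added or removed.
def genusOf (x : Config σ zs) (Q : Finset σ) : ℕ := if h : Q ∈ x.1 then x.2.2 ⟨Q, h⟩ else 0

def attachedTo (x : Config σ zs) (Q : Finset σ) : Finset { a // a ∈ zs } :=
  zs.attach.filter fun a => x.blockOf a = Q

def weight {M : Type*} [CommMonoid M] (W : ℕ → Multiset σ → M) (x : Config σ zs) : M :=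
  ∏ Q ∈ x.1, W (x.genusOf Q) (Q.val + (x.attachedTo Q).val.map Subtype.val)

def GenusCond (g k : ℕ) (x : Config σ zs) : Prop :=
  ∑ Q ∈ x.1, (x.genusOf Q : ℤ) = g + x.1.card - k

/-- A block whose factor is `W_{0,1}`. -/
def IsDisk (x : Config σ zs) (Q : Finset σ) : Prop :=
  x.genusOf Q = 0 ∧ Q.card + (x.attachedTo Q).card = 1

noncomputable def disks (x : Config σ zs) : Finset σ :=
  (x.1.sup id).filter fun s => {s} ∈ x.1 ∧ x.IsDisk {s}

theorem mem_attachedTo_blockOf (x : Config σ zs) (a : { a // a ∈ zs }) :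
    a ∈ x.attachedTo (x.blockOf a) := by
  simp [attachedTo]

theorem attachedTo_eq_empty (hQ : Q ∉ x.1) : x.attachedTo Q = ∅ :=
  filter_eq_empty_iff.2 fun a _ h => hQ (h ▸ x.blockOf_mem a)

theorem genusOf_eq_zero (hQ : Q ∉ x.1) : x.genusOf Q = 0 := dif_neg hQ

theorem genusOf_coe (x : Config σ zs) (P : { P // P ∈ x.1 }) : x.genusOf P.1 = x.2.2 P :=
  dif_pos P.2

theorem attachedTo_coe (x : Config σ zs) (P : { P // P ∈ x.1 }) :
    x.attachedTo P.1 = zs.attach.filter fun a => x.2.1 a = P :=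
  filter_congr fun _ _ => Subtype.ext_iff.symm

theorem isDisk_singleton_iff : x.IsDisk {s} ↔ x.genusOf {s} = 0 ∧ x.attachedTo {s} = ∅ := by
  simp [IsDisk]

theorem isDisk_of_notMem (hQ : Q ∉ x.1) (hcard : Q.card = 1) : x.IsDisk Q := by
  simp [IsDisk, genusOf_eq_zero hQ, attachedTo_eq_empty hQ, hcard]

theorem mem_disks : s ∈ x.disks ↔ {s} ∈ x.1 ∧ x.IsDisk {s} := by
  refine mem_filter.trans (and_iff_right_of_imp fun h => ?_)
  exact mem_sup.2 ⟨_, h.1, mem_singleton_self s⟩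

theorem image_singleton_disks_subset (x : Config σ zs) : x.disks.image singleton ⊆ x.1 := by
  simp only [image_subset_iff]
  exact fun s hs => (mem_disks.1 hs).1

theorem disks_subset {t : Finset σ} (hx : x.1 ∈ setPartitions t) : x.disks ⊆ t :=
  (mem_setPartitions.1 hx).1 ▸ filter_subset _ _

theorem genusOf_eq_zero_of_mem_image_disks (hQ : Q ∈ x.disks.image singleton) :
    x.genusOf Q = 0 := by
  obtain ⟨s, hs, rfl⟩ := mem_image.1 hQ
  exact (isDisk_singleton_iff.1 (mem_disks.1 hs).2).1

theorem blockOf_notMem_image_disks (x : Config σ zs) (a : { a // a ∈ zs }) :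
    x.blockOf a ∉ x.disks.image singleton := by
  intro ha
  obtain ⟨s, hs, hsa⟩ := mem_image.1 ha
  have hempty := (isDisk_singleton_iff.1 (mem_disks.1 hs).2).2
  rw [hsa] at hempty
  simpa [hempty] using x.mem_attachedTo_blockOf a

theorem ext_of_genusOf (hparts : x.1 = y.1) (hblock : x.blockOf = y.blockOf)
    (hgenus : x.genusOf = y.genusOf) : x = y := by
  obtain ⟨parts, f, γ⟩ := x
  obtain ⟨parts', f', γ'⟩ := y
  obtain rfl : parts = parts' := hparts
  have hf : f = f' := funext fun a => Subtype.ext (congrFun hblock a)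
  have hγ : γ = γ' := funext fun P => by
    simpa only [genusOf_coe] using congrFun hgenus P.1
  rw [hf, hγ]

end Config

section Reindexing

variable {σ : Type*} [DecidableEq σ] {zs : Finset σ} {x : Config σ zs} {g k : ℕ}

theorem sum_piFinset_range {ι M : Type*} [Fintype ι] [DecidableEq ι] [AddCommMonoid M] (N : ℕ)
    (G : (ι → ℕ) → M) :
    ∑ v ∈ Fintype.piFinset fun _ : ι => range N, G v = ∑ v : ι → Fin N, G fun i => v i :=
  sum_bij' (fun v hv i => ⟨v i, mem_range.1 (Fintype.mem_piFinset.1 hv i)⟩)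
    (fun v _ i => v i) (fun _ _ => mem_univ _)
    (fun v _ => Fintype.mem_piFinset.2 fun i => mem_range.2 (v i).isLt)
    (fun _ _ => rfl) (fun _ _ => rfl) (fun _ _ => rfl)

noncomputable def configs (g : ℕ) (t zs : Finset σ) : Finset (Config σ zs) :=
  (setPartitions t).sigma fun parts =>
    univ ×ˢ Fintype.piFinset fun _ => range (g + parts.card + 1)

theorem sum_configs {M : Type*} [AddCommMonoid M] (t : Finset σ) (F : Config σ zs → M) :
    ∑ x ∈ configs g t zs, F x =
      ∑ parts ∈ setPartitions t, ∑ f, ∑ γ : { P // P ∈ parts } → Fin (g + parts.card + 1),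
        F ⟨parts, f, fun P => γ P⟩ := by
  rw [configs, sum_sigma]
  refine sum_congr rfl fun parts _ => ?_
  rw [sum_product]
  exact sum_congr rfl fun f _ => sum_piFinset_range _ fun γ => F ⟨parts, f, γ⟩

noncomputable def eSet (g k : ℕ) (t zs : Finset σ) : Finset (Config σ zs) :=
  (configs g t zs).filter (Config.GenusCond g k)

noncomputable def rSet (g k : ℕ) (t zs : Finset σ) : Finset (Config σ zs) :=
  (eSet g k t zs).filter fun x => ∀ Q ∈ x.1, ¬x.IsDisk Q

theorem Config.genusOf_le_of_genusCond (hx : x.GenusCond g k) {Q : Finset σ} (hQ : Q ∈ x.1) :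
    (x.genusOf Q : ℤ) ≤ g + x.1.card - k :=
  hx ▸ single_le_sum (f := fun Q => (x.genusOf Q : ℤ)) (fun _ _ => by positivity) hQ

theorem mem_eSet {t : Finset σ} :
    x ∈ eSet g k t zs ↔ x.1 ∈ setPartitions t ∧ x.GenusCond g k := by
  simp only [eSet, configs, mem_filter, mem_sigma, mem_product, mem_univ, true_and,
    Fintype.mem_piFinset, mem_range]
  refine ⟨fun h => ⟨h.1.1, h.2⟩, fun h => ⟨⟨h.1, fun P => ?_⟩, h.2⟩⟩
  have := Config.genusOf_le_of_genusCond h.2 P.2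
  rw [Config.genusOf_coe] at this
  omega

theorem mem_rSet {t : Finset σ} :
    x ∈ rSet g k t zs ↔
      x.1 ∈ setPartitions t ∧ x.GenusCond g k ∧ ∀ Q ∈ x.1, ¬x.IsDisk Q := by
  rw [rSet, mem_filter, mem_eSet, and_assoc]

theorem Config.weight_eq_prod_coe {M : Type*} [CommMonoid M] (W : ℕ → Multiset σ → M)
    (x : Config σ zs) :
    x.weight W = ∏ P : { P // P ∈ x.1 },
      W (x.2.2 P) (P.1.val + (zs.attach.filter fun a => x.2.1 a = P).val.map Subtype.val) := by
  rw [weight, ← prod_coe_sort]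
  simp only [genusOf_coe, attachedTo_coe]

theorem Config.genusCond_iff :
    x.GenusCond g k ↔ ∑ P : { P // P ∈ x.1 }, (x.2.2 P : ℤ) = g + x.1.card - k := by
  rw [GenusCond, ← sum_coe_sort]
  simp only [genusOf_coe]

theorem Config.forall_not_isDisk_iff :
    (∀ Q ∈ x.1, ¬x.IsDisk Q) ↔ ∀ P : { P // P ∈ x.1 },
      ¬(x.2.2 P = 0 ∧ P.1.card + (zs.attach.filter fun a => x.2.1 a = P).card = 1) := by
  simp only [Subtype.forall, IsDisk, ← genusOf_coe, ← attachedTo_coe]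

variable {R : Type*} [CommRing R] (W : ℕ → Multiset σ → R)

theorem Esum_eq_sum_eSet (t : Finset σ) : Esum W k g t zs = ∑ x ∈ eSet g k t zs, x.weight W := by
  rw [eSet, sum_filter, sum_configs]
  refine sum_congr rfl fun parts _ => sum_congr rfl fun f _ => sum_congr rfl fun γ _ => ?_
  let x : Config σ zs := ⟨parts, f, fun P => γ P⟩
  exact if_congr (Config.genusCond_iff (x := x)).symm (Config.weight_eq_prod_coe W x).symm rfl

theorem Rsum_eq_sum_rSet (t : Finset σ) : Rsum W k g t zs = ∑ x ∈ rSet g k t zs, x.weight W := by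
  rw [rSet, eSet, filter_filter, sum_filter, sum_configs]
  refine sum_congr rfl fun parts _ => sum_congr rfl fun f _ => sum_congr rfl fun γ _ => ?_
  let x : Config σ zs := ⟨parts, f, fun P => γ P⟩
  exact if_congr (and_congr (Config.genusCond_iff (x := x)).symm
    (Config.forall_not_isDisk_iff (x := x)).symm) (Config.weight_eq_prod_coe W x).symm rfl

end Reindexing

namespace Config

variable {σ : Type*} [DecidableEq σ] {zs : Finset σ} {x y : Config σ zs} {β Q : Finset σ}
  {g k : ℕ}

noncomputable def removeDisks (x : Config σ zs) : Config σ zs :=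
  ⟨x.1 \ x.disks.image singleton,
    fun a => ⟨x.blockOf a, mem_sdiff.2 ⟨x.blockOf_mem a, x.blockOf_notMem_image_disks a⟩⟩,
    fun P => x.genusOf P.1⟩

def addDisks (β : Finset σ) (y : Config σ zs) : Config σ zs :=
  ⟨y.1 ∪ β.image singleton, fun a => ⟨y.blockOf a, mem_union_left _ (y.blockOf_mem a)⟩,
    fun P => y.genusOf P.1⟩

theorem removeDisks_fst (x : Config σ zs) : x.removeDisks.1 = x.1 \ x.disks.image singleton :=
  rfl

theorem addDisks_fst (β : Finset σ) (y : Config σ zs) :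
    (y.addDisks β).1 = y.1 ∪ β.image singleton :=
  rfl

theorem attachedTo_removeDisks (x : Config σ zs) : x.removeDisks.attachedTo = x.attachedTo :=
  rfl

theorem attachedTo_addDisks (β : Finset σ) (y : Config σ zs) :
    (y.addDisks β).attachedTo = y.attachedTo :=
  rfl

theorem mem_image_disks_of_notMem_removeDisks (hQx : Q ∈ x.1) (hQ : Q ∉ x.removeDisks.1) :
    Q ∈ x.disks.image singleton := by
  by_contra h
  exact hQ (mem_sdiff.2 ⟨hQx, h⟩)

theorem genusOf_removeDisks (x : Config σ zs) : x.removeDisks.genusOf = x.genusOf := by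
  funext Q
  by_cases hQ : Q ∈ x.removeDisks.1
  · exact dif_pos hQ
  · rw [genusOf_eq_zero hQ]
    by_cases hQx : Q ∈ x.1
    · exact (genusOf_eq_zero_of_mem_image_disks
        (mem_image_disks_of_notMem_removeDisks hQx hQ)).symm
    · exact (genusOf_eq_zero hQx).symm

theorem genusOf_addDisks (β : Finset σ) (y : Config σ zs) :
    (y.addDisks β).genusOf = y.genusOf := by
  funext Q
  by_cases hQ : Q ∈ (y.addDisks β).1
  · exact dif_pos hQ
  · rw [genusOf_eq_zero hQ, genusOf_eq_zero fun h => hQ (mem_union_left _ h)]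

theorem isDisk_removeDisks_iff : x.removeDisks.IsDisk Q ↔ x.IsDisk Q := by
  rw [IsDisk, IsDisk, genusOf_removeDisks, attachedTo_removeDisks]

theorem isDisk_addDisks_iff : (y.addDisks β).IsDisk Q ↔ y.IsDisk Q := by
  rw [IsDisk, IsDisk, genusOf_addDisks, attachedTo_addDisks]

theorem weight_eq_prod_disks_mul {M : Type*} [CommMonoid M] (W : ℕ → Multiset σ → M)
    (x : Config σ zs) : x.weight W = (∏ s ∈ x.disks, W 0 {s}) * x.removeDisks.weight W := by
  rw [weight, weight, genusOf_removeDisks, attachedTo_removeDisks, removeDisks_fst,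
    ← prod_sdiff x.image_singleton_disks_subset, mul_comm, prod_image singleton_injective.injOn]
  congr 1
  refine prod_congr rfl fun s hs => ?_
  obtain ⟨hgenus, hattached⟩ := isDisk_singleton_iff.1 (mem_disks.1 hs).2
  simp [hgenus, hattached]

theorem forall_not_isDisk_removeDisks (hne : ∅ ∉ x.1) :
    ∀ Q ∈ x.removeDisks.1, ¬x.removeDisks.IsDisk Q := by
  intro Q hQ hdisk
  obtain ⟨hQx, hQdisks⟩ := mem_sdiff.1 hQ
  rw [isDisk_removeDisks_iff] at hdisk
  have hpos : 0 < Q.card := card_pos.2 (nonempty_iff_ne_empty.2 fun h => hne (h ▸ hQx))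
  have hcard : Q.card = 1 := by
    have := hdisk.2
    omega
  obtain ⟨s, rfl⟩ := card_eq_one.1 hcard
  exact hQdisks (mem_image_of_mem _ (mem_disks.2 ⟨hQx, hdisk⟩))

theorem disks_addDisks (hy : ∀ Q ∈ y.1, ¬y.IsDisk Q)
    (hβ : Disjoint y.1 (β.image singleton)) : (y.addDisks β).disks = β := by
  ext s
  rw [mem_disks, isDisk_addDisks_iff, addDisks_fst, mem_union]
  constructor
  · rintro ⟨hs | hs, hdisk⟩
    · exact absurd hdisk (hy _ hs)
    · obtain ⟨s', hs', hss'⟩ := mem_image.1 hs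
      exact singleton_injective hss' ▸ hs'
  · intro hs
    have hsβ : ({s} : Finset σ) ∈ β.image singleton := mem_image_of_mem _ hs
    exact ⟨Or.inr hsβ, isDisk_of_notMem (disjoint_right.1 hβ hsβ) (card_singleton s)⟩

theorem addDisks_removeDisks (x : Config σ zs) : x.removeDisks.addDisks x.disks = x :=
  ext_of_genusOf (sdiff_union_of_subset x.image_singleton_disks_subset) rfl
    (by rw [genusOf_addDisks, genusOf_removeDisks])

theorem removeDisks_addDisks (hy : ∀ Q ∈ y.1, ¬y.IsDisk Q)
    (hβ : Disjoint y.1 (β.image singleton)) : (y.addDisks β).removeDisks = y := by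
  refine ext_of_genusOf ?_ rfl (by rw [genusOf_removeDisks, genusOf_addDisks])
  rw [removeDisks_fst, disks_addDisks hy hβ, addDisks_fst, union_sdiff_cancel_right hβ]

theorem genusCond_removeDisks_iff (hk : x.disks.card ≤ k) :
    x.removeDisks.GenusCond g (k - x.disks.card) ↔ x.GenusCond g k := by
  have hsum : ∑ Q ∈ x.removeDisks.1, (x.removeDisks.genusOf Q : ℤ) =
      ∑ Q ∈ x.1, (x.genusOf Q : ℤ) := by
    rw [genusOf_removeDisks]
    exact sum_subset sdiff_subset fun Q hQx hQ => by
      rw [genusOf_eq_zero_of_mem_image_disks (mem_image_disks_of_notMem_removeDisks hQx hQ),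
        Nat.cast_zero]
  have hcard : x.removeDisks.1.card + x.disks.card = x.1.card := by
    rw [← card_image_of_injective x.disks singleton_injective]
    exact card_sdiff_add_card_eq_card x.image_singleton_disks_subset
  rw [GenusCond, GenusCond, hsum]
  omega

end Config

open Config

section Bijection

variable {σ : Type*} [DecidableEq σ] {zs : Finset σ} {x y : Config σ zs} {t β : Finset σ}
  {g k : ℕ}

theorem removeDisks_mem_rSet (hx : x ∈ eSet g k t zs) (hk : x.disks.card ≤ k) :
    x.removeDisks ∈ rSet g (k - x.disks.card) (t \ x.disks) zs := by
  obtain ⟨hparts, hgenus⟩ := mem_eSet.1 hx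
  exact mem_rSet.2 ⟨sdiff_mem_setPartitions hparts x.image_singleton_disks_subset
    (image_singleton_mem_setPartitions _), (genusCond_removeDisks_iff hk).2 hgenus,
    forall_not_isDisk_removeDisks (mem_setPartitions.1 hparts).2.1⟩

theorem addDisks_mem_eSet (hy : y ∈ rSet g (k - β.card) (t \ β) zs) (hβ : β ⊆ t)
    (hk : β.card ≤ k) : y.addDisks β ∈ eSet g k t zs ∧ (y.addDisks β).disks = β := by
  obtain ⟨hparts, hgenus, hfree⟩ := mem_rSet.1 hy
  have hdisj := disjoint_image_singleton_of_mem_setPartitions_sdiff hparts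
  have hdisks := disks_addDisks hfree hdisj
  have hparts' := union_mem_setPartitions hparts (image_singleton_mem_setPartitions β)
    sdiff_disjoint
  rw [sdiff_union_of_subset hβ] at hparts'
  have hgenus' := genusCond_removeDisks_iff (x := y.addDisks β) (g := g) (hdisks ▸ hk)
  rw [removeDisks_addDisks hfree hdisj, hdisks] at hgenus'
  exact ⟨mem_eSet.2 ⟨hparts', hgenus'.1 hgenus⟩, hdisks⟩

theorem sum_eSet_filter_disks_eq {R : Type*} [CommSemiring R] (W : ℕ → Multiset σ → R)
    (hβ : β ⊆ t) (hk : β.card ≤ k) :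
    ∑ x ∈ (eSet g k t zs).filter (·.disks = β), x.weight W =
      (∏ s ∈ β, W 0 {s}) * ∑ y ∈ rSet g (k - β.card) (t \ β) zs, y.weight W := by
  rw [mul_sum]
  refine sum_nbij' removeDisks (addDisks β) ?_ ?_ ?_ ?_ ?_
  · intro x hx
    obtain ⟨hxE, rfl⟩ := mem_filter.1 hx
    exact removeDisks_mem_rSet hxE hk
  · intro y hy
    exact mem_filter.2 (addDisks_mem_eSet hy hβ hk)
  · intro x hx
    obtain ⟨-, rfl⟩ := mem_filter.1 hx
    exact addDisks_removeDisks x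
  · intro y hy
    obtain ⟨hparts, -, hfree⟩ := mem_rSet.1 hy
    exact removeDisks_addDisks hfree (disjoint_image_singleton_of_mem_setPartitions_sdiff hparts)
  · intro x hx
    obtain ⟨-, rfl⟩ := mem_filter.1 hx
    exact weight_eq_prod_disks_mul W x

end Bijection

end BouchardEynard

open BouchardEynard

theorem stmt7_general {σ R : Type*} [DecidableEq σ] [CommRing R]
    (W : ℕ → Multiset σ → R) (k g : ℕ) (t zs : Finset σ) (ht : t.card = k) :
    Esum W k g t zs =
      ∑ i ∈ Finset.range (k + 1), ∑ β ∈ t.powersetCard i,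
        (∏ s ∈ β, W 0 {s}) * Rsum W (k - i) g (t \ β) zs := by
  have hfiber (β : Finset σ) (hβ : β ∈ t.powerset) :
      ∑ x ∈ (eSet g k t zs).filter (·.disks = β), x.weight W =
        (∏ s ∈ β, W 0 {s}) * Rsum W (k - β.card) g (t \ β) zs := by
    rw [mem_powerset] at hβ
    rw [Rsum_eq_sum_rSet, sum_eSet_filter_disks_eq W hβ (ht ▸ card_le_card hβ)]
  rw [Esum_eq_sum_eSet, ← sum_fiberwise_of_maps_to
      (fun x hx => mem_powerset.2 (Config.disks_subset (mem_eSet.1 hx).1)),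
    sum_congr rfl hfiber, sum_powerset, ht]
  refine sum_congr rfl fun i _ => sum_congr rfl fun β hβ => ?_
  rw [(mem_powersetCard.1 hβ).2]

/-- Lemma 3.14 of Bouchard–Eynard: for all `g, n, k ≥ 0`,
`E^{(k)}W_{g,n+1}(t; z) = ∑_{i=0}^k ∑_{β ⊆ t, |β| = i} (∏_{s∈β} W_{0,1}(s)) ·
R^{(k-i)}W_{g,n+1}(t∖β; z)`. -/
theorem stmt7 {σ R : Type*} [DecidableEq σ] [CommRing R]
    (W : ℕ → Multiset σ → R) (k g : ℕ) (t zs : Finset σ) (ht : t.card = k)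
    (hd : Disjoint t zs) :
    Esum W k g t zs =
      ∑ i ∈ Finset.range (k + 1), ∑ β ∈ t.powersetCard i,
        (∏ s ∈ β, W 0 {s}) * Rsum W (k - i) g (t \ β) zs :=
  stmt7_general W k g t zs ht
end
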